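/- arXiv:0911.3696 — 2 statements merged into one kernel-verified Lean document; each statement's English description precedes it below -/
import Mathlib

section
/- For every α ∈ ℕ^N and β ∈ {0,1}^N with |β| = m−1, the differential of the twisted complex satisfies d*_m(x^α ⊗ (x*)^{∧β}) = Σ_{i=1}^N Ω_g(α, β, i) · x^{α+[i]} ⊗ (x*)^{∧(β+[i])}. Consequently the complex (A ⊗ ∧^•(V*), d*) decomposes as the direct sum, over γ ∈ (ℕ ∪ {−1})^N, of the subcomplexes K_{g,γ}^•, where K_{g,γ}^m is the k-span of {x^α ⊗ (x*)^{∧β} : α ∈ ℕ^N, β ∈ {0,1}^N, |β| = m, α − β = γ}. -/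
set_option synthInstance.maxHeartbeats 1000000
set_option maxHeartbeats 1000000

attribute [local instance] Classical.propDecidable

noncomputable section

open scoped TensorProduct

section QSA
variable (k : Type) [Field k] (N : ℕ) (q : Fin N → Fin N → k)

/-- The commutation relations of the quantum symmetric algebra. -/
inductive QRel : FreeAlgebra k (Fin N) → FreeAlgebra k (Fin N) → Prop
  | rel (i j : Fin N) : QRel (FreeAlgebra.ι k i * FreeAlgebra.ι k j)
      (q i j • (FreeAlgebra.ι k j * FreeAlgebra.ι k i))

/-- The quantum symmetric algebra `A = S_q(V)`. -/
abbrev QSA := RingQuot (QRel k N q)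

/-- The generator `x_i` of `S_q(V)`. -/
def X (i : Fin N) : QSA k N q := RingQuot.mkAlgHom k (QRel k N q) (FreeAlgebra.ι k i)

/-- The ordered monomial `x^α = x_1^{α_1} ⋯ x_N^{α_N}`. -/
def xpow (α : Fin N → ℕ) : QSA k N q := (List.ofFn fun i => X k N q i ^ α i).prod

end QSA

section Twisted
variable (k : Type) [Field k] (N : ℕ) (q : Fin N → Fin N → k) (lam : Fin N → k)

/-- The total space `A ⊗ ∧(V^*)` of the twisted cochain complex, in the `k`-basis
`(x*)^{∧β}` of `∧(V^*)` indexed by subsets `β ⊆ {1,…,N}`: an element is a finitely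
supported family of coefficients in `A`. -/
abbrev TwCochain := Finset (Fin N) →₀ QSA k N q

/-- The differential of the twisted complex,
`d*(x^α ⊗ (x*)^{∧β}) = Σ_{i : β_i = 0} (-1)^{β_1+⋯+β_i}
  [(∏_{s≤i} q_{s,i}^{β_s}) x_i x^α - λ_i (∏_{s≥i} q_{i,s}^{β_s}) x^α x_i] ⊗ (x*)^{∧(β+[i])}`. -/
def dtw : TwCochain k N q →ₗ[k] TwCochain k N q :=
  Finsupp.lsum k fun S : Finset (Fin N) =>
    ∑ i ∈ Sᶜ,
      (Finsupp.lsingle (insert i S)).comp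
        (((-1 : k) ^ (S.filter (fun s => s < i)).card) •
          ((∏ s ∈ S.filter (fun s => s ≤ i), q s i) • LinearMap.mulLeft k (X k N q i)
            - (lam i * ∏ s ∈ S.filter (fun s => i ≤ s), q i s) •
                LinearMap.mulRight k (X k N q i)))

/-- `ε(β,i) = (-1)^{β_1 + ⋯ + β_i}`. -/
def eps (β : Fin N → ℤ) (i : Fin N) : k :=
  (-1 : k) ^ (∑ s ∈ Finset.univ.filter (fun s => s ≤ i), β s)

/-- The scalar `Ω_g(α, β, i)` of the paper. -/
def Omega (α β : Fin N → ℤ) (i : Fin N) : k :=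
  if (∏ s, q i s ^ (α s - β s)) = lam i then 0
  else if β i ≠ 0 then 0
  else
    eps k N β i *
      ((∏ s ∈ Finset.univ.filter (fun s => s ≤ i), q i s ^ (α s - β s))
        - lam i * (∏ s ∈ Finset.univ.filter (fun s => i ≤ s), q s i ^ (α s - β s)))

/-- A subset `β ⊆ {1,…,N}`, considered as a `{0,1}`-vector in `ℤ^N`. -/
def betaZ (S : Finset (Fin N)) : Fin N → ℤ := fun s => if s ∈ S then 1 else 0

/-- `K_{g,γ}^m`: the span of the basis elements `x^α ⊗ (x*)^{∧β}` with `|β| = m` and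
`α - β = γ` (all degrees `m` assembled together). -/
def Kspan (γ : Fin N → ℤ) : Submodule k (TwCochain k N q) :=
  Submodule.span k {f | ∃ (α : Fin N → ℕ) (S : Finset (Fin N)),
    (fun s => (α s : ℤ)) - betaZ N S = γ ∧ f = Finsupp.single S (xpow k N q α)}

end Twisted


/-!
`x_i x^α` and `x^α x_i` are scalar multiples of `x^{α+[i]}`: moving `x_i` to its place picks up
`∏_{s<i} q_{i,s}^{α_s}`, resp. `∏_{s>i} q_{s,i}^{α_s}`. Together with the signs and `q`-factors
carried by `(x*)^{∧β}`, these are exactly the two products in `Ω_g(α,β,i)`, written in terms of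
`γ = α - β`; in particular `d*` preserves `γ`.

The decomposition then comes from the fact that the ordered monomials `x^α` form a basis of
`S_q(V)`. They span because `x_i x^α` is again a multiple of a monomial. They are linearly
independent because `x_i ↦ (y^α ↦ (∏_{s<i} q_{i,s}^{α_s}) y^{α+[i]})` defines a representation of
`S_q(V)` on `k[y_1,…,y_N]` under which `x^α · 1 = y^α`. The `K_{g,γ}` are spanned by the pieces
of the resulting basis `x^α ⊗ (x*)^{∧β}` sorted by `γ`, hence form an internal direct sum.
-/

open Finset

section Commutation
variable {R A ι : Type*} [CommSemiring R] [Semiring A] [Algebra R A]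

theorem mul_list_prod_map_eq_smul {a : A} {g : ι → A} {c : ι → R}
    (h : ∀ s, a * g s = c s • (g s * a)) (L : List ι) :
    a * (L.map g).prod = (L.map c).prod • ((L.map g).prod * a) := by
  induction L with
  | nil => simp
  | cons s L ih =>
    simp only [List.map_cons, List.prod_cons]
    rw [← mul_assoc, h, smul_mul_assoc, mul_assoc, ih, mul_smul_comm, smul_smul, mul_assoc]

theorem list_prod_map_mul_eq_smul {a : A} {g : ι → A} {c : ι → R}
    (h : ∀ s, g s * a = c s • (a * g s)) (L : List ι) :
    (L.map g).prod * a = (L.map c).prod • (a * (L.map g).prod) := by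
  induction L with
  | nil => simp
  | cons s L ih =>
    simp only [List.map_cons, List.prod_cons]
    rw [mul_assoc, ih, mul_smul_comm, ← mul_assoc, h, smul_mul_assoc, smul_smul, mul_comm (c s),
      mul_assoc]

theorem mul_pow_eq_smul {a b : A} {c : R} (h : a * b = c • (b * a)) (n : ℕ) :
    a * b ^ n = c ^ n • (b ^ n * a) := by
  simpa using mul_list_prod_map_eq_smul (g := fun _ : Unit => b) (fun _ => h) (List.replicate n ())

theorem pow_mul_eq_smul {a b : A} {c : R} (h : b * a = c • (a * b)) (n : ℕ) :
    b ^ n * a = c ^ n • (a * b ^ n) := by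
  simpa using list_prod_map_mul_eq_smul (g := fun _ : Unit => b) (fun _ => h) (List.replicate n ())

end Commutation

section Generation
variable {R A : Type*} [CommSemiring R] [Semiring A] [Algebra R A]

theorem Submodule.span_eq_top_of_adjoin_eq_top {s T : Set A} (hs : Algebra.adjoin R s = ⊤)
    (h1 : 1 ∈ span R T) (hmul : ∀ x ∈ s, ∀ t ∈ T, x * t ∈ span R T) : span R T = ⊤ := by
  have hmul' (x : A) (hx : x ∈ s) : span R T ≤ (span R T).comap (LinearMap.mulLeft R x) :=
    span_le.mpr (hmul x hx)
  have hle : Subalgebra.toSubmodule (Algebra.adjoin R s) ≤ span R T := by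
    rw [Algebra.adjoin_eq_span, span_le]
    intro a ha
    induction ha using Submonoid.closure_induction_left with
    | one => exact h1
    | mul_left x hx y _ ih => exact hmul' x hx ih
  rwa [hs, Algebra.top_toSubmodule, top_le_iff] at hle

end Generation

section Fibres
variable {ι Γ R M : Type*} [Semiring R] [AddCommMonoid M] [Module R M]

theorem LinearIndependent.iSupIndep_span_image_preimage {v : ι → M} (hv : LinearIndependent R v)
    (f : ι → Γ) : iSupIndep fun γ => Submodule.span R (v '' (f ⁻¹' {γ})) := by
  intro γ
  refine (hv.disjoint_span_image (t := (f ⁻¹' {γ})ᶜ) disjoint_compl_right).mono_right ?_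
  refine iSup₂_le fun γ' hγ' => Submodule.span_mono (Set.image_mono fun x hx => ?_)
  simp_all

theorem Submodule.iSup_span_image_preimage (v : ι → M) (f : ι → Γ) :
    ⨆ γ, span R (v '' (f ⁻¹' {γ})) = span R (Set.range v) := by
  rw [← span_iUnion, ← Set.image_iUnion, ← Set.preimage_iUnion, Set.iUnion_of_singleton,
    Set.preimage_univ, Set.image_univ]

end Fibres

theorem Pi.induction_add_single {ι : Type*} [Finite ι] [DecidableEq ι] {P : (ι → ℕ) → Prop}
    (zero : P 0) (add_single : ∀ α i, P α → P (α + Pi.single i 1)) (α : ι → ℕ) : P α := by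
  suffices ∀ β, P β → P (β + α) by simpa using this 0 zero
  induction α using Pi.single_induction with
  | zero => simp
  | add f g hf hg => exact fun β hβ => add_assoc β f g ▸ hg _ (hf β hβ)
  | single i n =>
    induction n with
    | zero => simp
    | succ n ih =>
      intro β hβ
      simpa [add_assoc, ← Pi.single_add] using add_single _ i (ih β hβ)

theorem List.finRange_eq_take_append_cons_drop {N : ℕ} (i : Fin N) :
    List.finRange N = (List.finRange N).take i ++ i :: (List.finRange N).drop (i + 1) := by
  conv_lhs => rw [← List.take_append_drop i (List.finRange N),
    ← List.getElem_cons_drop (by simp : (i : ℕ) < (List.finRange N).length)]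
  simp

theorem List.mem_take_finRange {N : ℕ} {i s : Fin N} :
    s ∈ (List.finRange N).take i ↔ s < i := by
  rw [List.mem_take_iff_idxOf_lt (List.mem_finRange s), List.idxOf_finRange, Fin.lt_def]

theorem List.mem_drop_finRange {N : ℕ} {i s : Fin N} :
    s ∈ (List.finRange N).drop (i + 1) ↔ i < s := by
  rw [List.mem_drop_iff_getElem, Fin.lt_def]
  constructor
  · rintro ⟨m, hm, rfl⟩
    simp only [List.getElem_finRange, Fin.val_cast]
    omega
  · intro h
    refine ⟨s - (i + 1), by simp; omega, Fin.ext ?_⟩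
    simp only [List.getElem_finRange, Fin.val_cast]
    omega

section QuantumSymmetricAlgebra
variable {k : Type} [Field k] {N : ℕ} {q : Fin N → Fin N → k}

theorem X_mul_X (i j : Fin N) : X k N q i * X k N q j = q i j • (X k N q j * X k N q i) := by
  simpa [X] using RingQuot.mkAlgHom_rel k (QRel.rel (k := k) (q := q) i j)

theorem xpow_zero : xpow k N q 0 = 1 := by
  simp [xpow]

theorem xpow_eq_mul (α : Fin N → ℕ) (i : Fin N) :
    xpow k N q α = (((List.finRange N).take i).map fun s => X k N q s ^ α s).prod *
      (X k N q i ^ α i * (((List.finRange N).drop (i + 1)).map fun s => X k N q s ^ α s).prod) := by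
  rw [xpow, List.ofFn_eq_map]
  conv_lhs => rw [List.finRange_eq_take_append_cons_drop i]
  simp

theorem xpow_add_single (α : Fin N → ℕ) (i : Fin N) :
    xpow k N q (α + Pi.single i 1) =
      (((List.finRange N).take i).map fun s => X k N q s ^ α s).prod *
        (X k N q i ^ (α i + 1) *
          (((List.finRange N).drop (i + 1)).map fun s => X k N q s ^ α s).prod) := by
  have hne {s : Fin N} (h : s ≠ i) : (α + Pi.single i 1 : Fin N → ℕ) s = α s := by simp [h]
  rw [xpow_eq_mul _ i, List.map_congr_left fun s hs => by
      rw [hne (List.mem_take_finRange.mp hs).ne],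
    List.map_congr_left (l := List.drop _ _) fun s hs => by
      rw [hne (List.mem_drop_finRange.mp hs).ne']]
  simp

theorem X_mul_xpow (i : Fin N) (α : Fin N → ℕ) :
    X k N q i * xpow k N q α
      = (∏ s ∈ univ.filter (· < i), q i s ^ α s) • xpow k N q (α + Pi.single i 1) := by
  rw [xpow_add_single, xpow_eq_mul α i, ← mul_assoc,
    mul_list_prod_map_eq_smul (fun s => mul_pow_eq_smul (X_mul_X i s) (α s)), smul_mul_assoc,
    mul_assoc, ← mul_assoc (X k N q i), ← pow_succ',
    ← List.prod_toFinset _ ((List.nodup_finRange N).sublist (List.take_sublist _ _))]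
  congr 2
  ext s
  simp [List.mem_take_finRange]

theorem xpow_mul_X (i : Fin N) (α : Fin N → ℕ) :
    xpow k N q α * X k N q i
      = (∏ s ∈ univ.filter (i < ·), q s i ^ α s) • xpow k N q (α + Pi.single i 1) := by
  rw [xpow_add_single, xpow_eq_mul α i, mul_assoc, mul_assoc,
    list_prod_map_mul_eq_smul (fun s => pow_mul_eq_smul (X_mul_X s i) (α s)) (List.drop _ _),
    mul_smul_comm, mul_smul_comm, ← mul_assoc (X k N q i ^ α i), ← pow_succ,
    ← List.prod_toFinset _ ((List.nodup_finRange N).sublist (List.drop_sublist _ _))]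
  congr 2
  ext s
  simp [List.mem_drop_finRange]

theorem adjoin_range_X : Algebra.adjoin k (Set.range (X k N q)) = ⊤ := by
  rw [show Set.range (X k N q) = RingQuot.mkAlgHom k (QRel k N q) '' Set.range (FreeAlgebra.ι k)
      from Set.range_comp _ _, Algebra.adjoin_image, FreeAlgebra.adjoin_range_ι, Algebra.map_top,
    AlgHom.range_eq_top]
  exact RingQuot.mkAlgHom_surjective k _

theorem span_range_xpow : Submodule.span k (Set.range (xpow k N q)) = ⊤ := by
  refine Submodule.span_eq_top_of_adjoin_eq_top adjoin_range_X
    (xpow_zero (q := q) ▸ Submodule.subset_span ⟨0, rfl⟩) ?_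
  rintro _ ⟨i, rfl⟩ _ ⟨α, rfl⟩
  rw [X_mul_xpow]
  exact Submodule.smul_mem _ _ (Submodule.subset_span ⟨_, rfl⟩)

end QuantumSymmetricAlgebra

section Representation
variable {k : Type} [Field k] {N : ℕ} {q : Fin N → Fin N → k}

variable (q) in
def shiftOp (i : Fin N) : Module.End k ((Fin N → ℕ) →₀ k) :=
  Finsupp.lsum k fun α =>
    (∏ s ∈ univ.filter (· < i), q i s ^ α s) • Finsupp.lsingle (α + Pi.single i 1)

theorem shiftOp_single (i : Fin N) (α : Fin N → ℕ) (c : k) :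
    shiftOp q i (Finsupp.single α c)
      = (∏ s ∈ univ.filter (· < i), q i s ^ α s) • Finsupp.single (α + Pi.single i 1) c := by
  simp [shiftOp]

theorem prod_lt_pow_add_single (i j : Fin N) (α : Fin N → ℕ) :
    ∏ s ∈ univ.filter (· < i), q i s ^ (α + Pi.single j 1 : Fin N → ℕ) s
      = (∏ s ∈ univ.filter (· < i), q i s ^ α s) * if j < i then q i j else 1 := by
  simp only [Pi.add_apply, pow_add, Finset.prod_mul_distrib, Pi.single_apply, pow_ite, pow_one,
    pow_zero, Finset.prod_ite_eq', Finset.mem_filter, Finset.mem_univ, true_and]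

variable (hq0 : ∀ i j, q i j ≠ 0) (hq1 : ∀ i, q i i = 1) (hqinv : ∀ i j, q j i = (q i j)⁻¹)
include hq0 hq1 hqinv

theorem shiftOp_mul_shiftOp (i j : Fin N) :
    shiftOp q i * shiftOp q j = q i j • (shiftOp q j * shiftOp q i) := by
  refine Finsupp.lhom_ext fun α c => ?_
  simp only [Module.End.mul_apply, LinearMap.smul_apply, shiftOp_single, map_smul,
    prod_lt_pow_add_single, smul_smul, add_right_comm α (Pi.single j 1) (Pi.single i 1)]
  congr 1
  rcases lt_trichotomy i j with h | rfl | h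
  · simp only [h, h.not_gt, if_true, if_false, hqinv i j]
    field_simp [hq0 i j]
  · simp [hq1]
  · simp only [h, h.not_gt, if_true, if_false]
    ring

def polyRep : QSA k N q →ₐ[k] Module.End k ((Fin N → ℕ) →₀ k) :=
  RingQuot.liftAlgHom k ⟨FreeAlgebra.lift k (shiftOp q), by
    rintro _ _ ⟨i, j⟩
    simpa using shiftOp_mul_shiftOp hq0 hq1 hqinv i j⟩

theorem polyRep_X (i : Fin N) : polyRep hq0 hq1 hqinv (X k N q i) = shiftOp q i := by
  rw [X, polyRep, RingQuot.liftAlgHom_mkAlgHom_apply, FreeAlgebra.lift_ι_apply]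

theorem polyRep_xpow_single_zero (α : Fin N → ℕ) :
    polyRep hq0 hq1 hqinv (xpow k N q α) (Finsupp.single 0 1) = Finsupp.single α 1 := by
  induction α using Pi.induction_add_single with
  | zero => simp [xpow_zero]
  | add_single α i ih =>
    have h := congrArg (polyRep hq0 hq1 hqinv · (Finsupp.single 0 1)) (X_mul_xpow (q := q) i α)
    simp only [map_mul, Module.End.mul_apply, ih, polyRep_X, shiftOp_single, map_smul,
      LinearMap.smul_apply] at h
    have hc : ∏ s ∈ univ.filter (· < i), q i s ^ α s ≠ 0 :=
      prod_ne_zero_iff.mpr fun s _ => pow_ne_zero _ (hq0 i s)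
    exact (smul_right_injective _ hc h).symm

theorem linearIndependent_xpow : LinearIndependent k (xpow k N q) := by
  refine LinearIndependent.of_comp
    (LinearMap.applyₗ (Finsupp.single 0 1) ∘ₗ (polyRep hq0 hq1 hqinv).toLinearMap) ?_
  convert Finsupp.linearIndependent_single_one k (Fin N → ℕ) with α
  simp [polyRep_xpow_single_zero]

def xpowBasis : Module.Basis (Fin N → ℕ) k (QSA k N q) :=
  .mk (linearIndependent_xpow hq0 hq1 hqinv) span_range_xpow.ge

theorem coe_xpowBasis : ⇑(xpowBasis hq0 hq1 hqinv) = xpow k N q := Module.Basis.coe_mk _ _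

end Representation

section Omega
variable {k : Type} [Field k] {N : ℕ} {q : Fin N → Fin N → k} {lam : Fin N → k}

theorem Omega_of_ne_zero {α β : Fin N → ℤ} {i : Fin N} (h : β i ≠ 0) :
    Omega k N q lam α β i = 0 := by
  simp [Omega, h]

theorem eps_betaZ {S : Finset (Fin N)} {i : Fin N} (hi : i ∉ S) :
    eps k N (betaZ N S) i = (-1) ^ (S.filter (· < i)).card := by
  simp only [eps, betaZ, sum_boole, zpow_natCast]
  congr 2
  ext s
  simp only [mem_filter, mem_univ, true_and]
  exact ⟨fun h => ⟨h.2, h.1.lt_of_ne (ne_of_mem_of_not_mem h.2 hi)⟩, fun h => ⟨h.2.le, h.1⟩⟩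

variable (hq0 : ∀ i j, q i j ≠ 0) (hq1 : ∀ i, q i i = 1) (hqinv : ∀ i j, q j i = (q i j)⁻¹)
include hq0 hq1 hqinv

theorem prod_le_zpow_eq_prod_mul_prod_ge (γ : Fin N → ℤ) (i : Fin N) :
    ∏ s ∈ univ.filter (· ≤ i), q i s ^ γ s
      = (∏ s, q i s ^ γ s) * ∏ s ∈ univ.filter (i ≤ ·), q s i ^ γ s := by
  rw [prod_filter, prod_filter, ← prod_mul_distrib]
  refine prod_congr rfl fun s _ => ?_
  rcases lt_trichotomy s i with h | rfl | h
  · simp [h.le, h.not_ge]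
  · simp [hq1]
  · simp [h.not_ge, h.le, hqinv i s, mul_inv_cancel₀ (zpow_ne_zero _ (hq0 i s))]

/-- The case `∏ s, q i s ^ (α s - β s) = lam i` of `Omega` agrees with the general formula, since
the bracket vanishes there. -/
theorem Omega_of_eq_zero {α β : Fin N → ℤ} {i : Fin N} (h : β i = 0) :
    Omega k N q lam α β i = eps k N β i * ((∏ s ∈ univ.filter (· ≤ i), q i s ^ (α s - β s))
      - lam i * ∏ s ∈ univ.filter (i ≤ ·), q s i ^ (α s - β s)) := by
  rw [Omega, if_neg (not_not.mpr h)]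
  split_ifs with hlam
  · rw [prod_le_zpow_eq_prod_mul_prod_ge hq0 hq1 hqinv, hlam, sub_self, mul_zero]
  · rfl

theorem prod_le_zpow_sub_betaZ (α : Fin N → ℕ) {S : Finset (Fin N)} {i : Fin N} (hi : i ∉ S) :
    ∏ s ∈ univ.filter (· ≤ i), q i s ^ ((α s : ℤ) - betaZ N S s)
      = (∏ s ∈ S.filter (· ≤ i), q s i) * ∏ s ∈ univ.filter (· < i), q i s ^ α s := by
  rw [prod_filter, prod_filter, prod_filter, ← Fintype.prod_extend_by_one S, ← prod_mul_distrib]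
  refine prod_congr rfl fun s _ => ?_
  rcases lt_trichotomy s i with h | rfl | h
  · by_cases hs : s ∈ S <;>
      simp [betaZ, hs, h.le, h, hqinv i s, zpow_sub₀ (hq0 i s), div_eq_mul_inv, mul_comm]
  · simp [betaZ, hi, hq1]
  · simp [h.not_ge, h.not_gt]

theorem prod_ge_zpow_sub_betaZ (α : Fin N → ℕ) {S : Finset (Fin N)} {i : Fin N} (hi : i ∉ S) :
    ∏ s ∈ univ.filter (i ≤ ·), q s i ^ ((α s : ℤ) - betaZ N S s)
      = (∏ s ∈ S.filter (i ≤ ·), q i s) * ∏ s ∈ univ.filter (i < ·), q s i ^ α s := by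
  rw [prod_filter, prod_filter, prod_filter, ← Fintype.prod_extend_by_one S, ← prod_mul_distrib]
  refine prod_congr rfl fun s _ => ?_
  rcases lt_trichotomy s i with h | rfl | h
  · simp [h.not_ge, h.not_gt]
  · simp [betaZ, hi, hq1]
  · by_cases hs : s ∈ S <;>
      simp [betaZ, hs, h.le, h, hqinv s i, zpow_sub₀ (hq0 s i), div_eq_mul_inv, mul_comm]

end Omega

section Differential
variable {k : Type} [Field k] {N : ℕ} {q : Fin N → Fin N → k} {lam : Fin N → k}

theorem dtw_single_xpow (α : Fin N → ℕ) (S : Finset (Fin N)) :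
    dtw k N q lam (Finsupp.single S (xpow k N q α)) =
      ∑ i ∈ Sᶜ, ((-1) ^ (S.filter (· < i)).card *
          ((∏ s ∈ S.filter (· ≤ i), q s i) * (∏ s ∈ univ.filter (· < i), q i s ^ α s)
            - (lam i * ∏ s ∈ S.filter (i ≤ ·), q i s) * ∏ s ∈ univ.filter (i < ·), q s i ^ α s)) •
        Finsupp.single (insert i S) (xpow k N q (α + Pi.single i 1)) := by
  simp [dtw, X_mul_xpow, xpow_mul_X, smul_smul, ← sub_smul]

theorem dtw_single_xpow_eq_sum_Omega (hq0 : ∀ i j, q i j ≠ 0) (hq1 : ∀ i, q i i = 1)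
    (hqinv : ∀ i j, q j i = (q i j)⁻¹) (α : Fin N → ℕ) (S : Finset (Fin N)) :
    dtw k N q lam (Finsupp.single S (xpow k N q α)) =
      ∑ i, Omega k N q lam (fun s => (α s : ℤ)) (betaZ N S) i •
        Finsupp.single (insert i S) (xpow k N q (α + Pi.single i 1)) := by
  rw [dtw_single_xpow, ← sum_subset (subset_univ Sᶜ) fun i _ hi => by
    rw [Omega_of_ne_zero (by simpa [betaZ] using hi), zero_smul]]
  refine sum_congr rfl fun i hi => ?_
  have hi : i ∉ S := mem_compl.mp hi
  rw [Omega_of_eq_zero hq0 hq1 hqinv (by simp [betaZ, hi]), eps_betaZ hi,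
    prod_le_zpow_sub_betaZ hq0 hq1 hqinv α hi, prod_ge_zpow_sub_betaZ hq0 hq1 hqinv α hi,
    ← mul_assoc (lam i)]

theorem sub_betaZ_insert (α : Fin N → ℕ) {S : Finset (Fin N)} {i : Fin N} (hi : i ∉ S) :
    (fun s => ((α + Pi.single i 1 : Fin N → ℕ) s : ℤ)) - betaZ N (insert i S)
      = (fun s => (α s : ℤ)) - betaZ N S := by
  ext s
  rcases eq_or_ne s i with rfl | h
  · simp [betaZ, hi]
  · simp [betaZ, h]

theorem map_dtw_Kspan_le (γ : Fin N → ℤ) :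
    (Kspan k N q γ).map (dtw k N q lam) ≤ Kspan k N q γ := by
  rw [Kspan, Submodule.map_span_le]
  rintro _ ⟨α, S, rfl, rfl⟩
  rw [dtw_single_xpow]
  exact Submodule.sum_mem _ fun i hi => Submodule.smul_mem _ _
    (Submodule.subset_span ⟨_, _, sub_betaZ_insert α (mem_compl.mp hi), rfl⟩)

end Differential

section Decomposition
variable {k : Type} [Field k] {N : ℕ} {q : Fin N → Fin N → k}

def monomialWeight (p : Σ _ : Finset (Fin N), Fin N → ℕ) : {γ : Fin N → ℤ // ∀ i, -1 ≤ γ i} :=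
  ⟨(fun s => (p.2 s : ℤ)) - betaZ N p.1, fun i => by
    simp only [Pi.sub_apply, betaZ]
    split_ifs <;> omega⟩

theorem Kspan_eq_span_image_preimage (γ : {γ : Fin N → ℤ // ∀ i, -1 ≤ γ i}) :
    Kspan k N q γ.1 = Submodule.span k
      ((fun p => Finsupp.single p.1 (xpow k N q p.2)) '' (monomialWeight ⁻¹' {γ})) := by
  rw [Kspan]
  congr 1
  ext f
  simp only [Set.mem_ofPred_eq, Set.mem_image, Set.mem_preimage, Set.mem_singleton_iff,
    Sigma.exists, monomialWeight, Subtype.ext_iff]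
  exact exists_comm.trans (by simp only [eq_comm])

variable (hq0 : ∀ i j, q i j ≠ 0) (hq1 : ∀ i, q i i = 1) (hqinv : ∀ i j, q j i = (q i j)⁻¹)
include hq0 hq1 hqinv

theorem linearIndependent_single_xpow :
    LinearIndependent k fun p : Σ _ : Finset (Fin N), Fin N → ℕ =>
      Finsupp.single p.1 (xpow k N q p.2) := by
  simpa [coe_xpowBasis] using (Finsupp.basis fun _ => xpowBasis hq0 hq1 hqinv).linearIndependent

theorem iSupIndep_Kspan :
    iSupIndep fun γ : {γ : Fin N → ℤ // ∀ i, -1 ≤ γ i} => Kspan k N q γ.1 := by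
  simp_rw [Kspan_eq_span_image_preimage]
  exact (linearIndependent_single_xpow hq0 hq1 hqinv).iSupIndep_span_image_preimage monomialWeight

theorem iSup_Kspan : ⨆ γ : {γ : Fin N → ℤ // ∀ i, -1 ≤ γ i}, Kspan k N q γ.1 = ⊤ := by
  simp_rw [Kspan_eq_span_image_preimage, Submodule.iSup_span_image_preimage]
  simpa [coe_xpowBasis] using (Finsupp.basis fun _ => xpowBasis hq0 hq1 hqinv).span_eq

end Decomposition

theorem stmt9_general (k : Type) [Field k] (N : ℕ)
    (q : Fin N → Fin N → k) (hq0 : ∀ i j, q i j ≠ 0) (hq1 : ∀ i, q i i = 1)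
    (hqinv : ∀ i j, q j i = (q i j)⁻¹)
    (lam : Fin N → k) :
    -- the differential in terms of the scalars `Ω_g`:
    (∀ (α : Fin N → ℕ) (S : Finset (Fin N)),
      dtw k N q lam (Finsupp.single S (xpow k N q α)) =
        ∑ i : Fin N,
          Omega k N q lam (fun s => (α s : ℤ)) (betaZ N S) i •
            Finsupp.single (insert i S) (xpow k N q (α + Pi.single i 1))) ∧
    -- each `K_{g,γ}` is a subcomplex:
    (∀ γ : {γ : Fin N → ℤ // ∀ i, -1 ≤ γ i},
      (Kspan k N q γ.1).map (dtw k N q lam) ≤ Kspan k N q γ.1) ∧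
    -- and the complex is their (internal) direct sum:
    iSupIndep (fun γ : {γ : Fin N → ℤ // ∀ i, -1 ≤ γ i} => Kspan k N q γ.1) ∧
    (⨆ γ : {γ : Fin N → ℤ // ∀ i, -1 ≤ γ i}, Kspan k N q γ.1) = ⊤ :=
  ⟨dtw_single_xpow_eq_sum_Omega hq0 hq1 hqinv, fun γ => map_dtw_Kspan_le γ.1,
    iSupIndep_Kspan hq0 hq1 hqinv, iSup_Kspan hq0 hq1 hqinv⟩

/-- Formula (9) of the paper and Lemma 4.4: the differential of the twisted complex is
`d*(x^α ⊗ (x*)^{∧β}) = Σ_{i=1}^N Ω_g(α,β,i) x^{α+[i]} ⊗ (x*)^{∧(β+[i])}`, and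
consequently the twisted complex is the direct sum, over
`γ ∈ (ℕ ∪ {-1})^N`, of the subcomplexes `K_{g,γ}^•`. -/
theorem stmt9 (k : Type) [Field k] [CharZero k] (N : ℕ) (hN : 0 < N)
    (q : Fin N → Fin N → k) (hq0 : ∀ i j, q i j ≠ 0) (hq1 : ∀ i, q i i = 1)
    (hqinv : ∀ i j, q j i = (q i j)⁻¹)
    (lam : Fin N → k) (hlam : ∀ i, lam i ≠ 0) :
    -- the differential in terms of the scalars `Ω_g`:
    (∀ (α : Fin N → ℕ) (S : Finset (Fin N)),
      dtw k N q lam (Finsupp.single S (xpow k N q α)) =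
        ∑ i : Fin N,
          Omega k N q lam (fun s => (α s : ℤ)) (betaZ N S) i •
            Finsupp.single (insert i S) (xpow k N q (α + Pi.single i 1))) ∧
    -- each `K_{g,γ}` is a subcomplex:
    (∀ γ : {γ : Fin N → ℤ // ∀ i, -1 ≤ γ i},
      (Kspan k N q γ.1).map (dtw k N q lam) ≤ Kspan k N q γ.1) ∧
    -- and the complex is their (internal) direct sum:
    iSupIndep (fun γ : {γ : Fin N → ℤ // ∀ i, -1 ≤ γ i} => Kspan k N q γ.1) ∧
    (⨆ γ : {γ : Fin N → ℤ // ∀ i, -1 ≤ γ i}, Kspan k N q γ.1) = ⊤ :=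
  stmt9_general k N q hq0 hq1 hqinv lam
end
end

section
/- For every α ∈ ℕ^N, β ∈ {0,1}^N and i ≠ j in {1,…,N}, the following identity holds in k: Ω_g(α,β,i) · ω_g(α+[i], β+[i], j) + ω_g(α,β,j) · Ω_g(α−[j], β−[j], i) = 0. -/
attribute [local instance] Classical.propDecidable

noncomputable section

section Scalars
variable (k : Type) [Field k] (N : ℕ) (q : Fin N → Fin N → k) (lam : Fin N → k)

/-- The scalar `ω_g(α, β, i)` of the paper: `0` if `∏_{s=1}^N q_{i,s}^{α_s-β_s} = λ_i`,
or `α_i ≤ 0`, or `β_i ≠ 1`; and `Ω_g(α-[i], β-[i], i)⁻¹` otherwise. -/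
def omg (α β : Fin N → ℤ) (i : Fin N) : k :=
  if (∏ s, q i s ^ (α s - β s)) = lam i then 0
  else if α i ≤ 0 then 0
  else if β i ≠ 1 then 0
  else (Omega k N q lam (α - Pi.single i 1) (β - Pi.single i 1) i)⁻¹

/-- `‖γ‖_g`, the number of indices `i` with `∏_{s=1}^N q_{i,s}^{γ_s} ≠ λ_i` and
`γ_i ≠ -1`. -/
def normg (γ : Fin N → ℤ) : ℕ :=
  (Finset.univ.filter (fun i : Fin N => (∏ s, q i s ^ γ s) ≠ lam i ∧ γ i ≠ -1)).card

end Scalars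


lemma eps_ne_zero (k : Type) [Field k] [CharZero k] (N : ℕ) (β : Fin N → ℤ) (l : Fin N) :
    eps k N β l ≠ 0 := zpow_ne_zero _ (by norm_num)

lemma eps_add_single (k : Type) [Field k] (N : ℕ) (β : Fin N → ℤ) (i l : Fin N) (c : ℤ) :
    eps k N (β + Pi.single i c) l = eps k N β l * (if i ≤ l then (-1 : k) ^ c else 1) := by
  unfold eps
  have h : ∑ s ∈ Finset.univ.filter (fun s => s ≤ l), (β s + (Pi.single i c : Fin N → ℤ) s)
      = (∑ s ∈ Finset.univ.filter (fun s => s ≤ l), β s) + (if i ≤ l then c else 0) := by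
    rw [Finset.sum_add_distrib]
    congr 1
    simp [Pi.single_apply, Finset.sum_ite_eq']
  simp only [Pi.add_apply]
  rw [h, zpow_add₀ (by norm_num : (-1 : k) ≠ 0)]
  congr 1
  split_ifs <;> simp

lemma sub_single_eq (N : ℕ) (β : Fin N → ℤ) (j : Fin N) (c : ℤ) :
    β - Pi.single j c = β + Pi.single j (-c) := by
  funext s
  by_cases hs : s = j <;> simp [Pi.single_apply, hs] <;> ring

lemma Omega_eval (k : Type) [Field k] (N : ℕ) (q : Fin N → Fin N → k) (lam : Fin N → k)
    (hq0 : ∀ i j, q i j ≠ 0) (hq1 : ∀ i, q i i = 1) (hqinv : ∀ i j, q j i = (q i j)⁻¹)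
    (α β γ : Fin N → ℤ) (l : Fin N) (hγ : ∀ s, α s - β s = γ s)
    (hP : (∏ s, q l s ^ γ s) ≠ lam l) (hβl : β l = 0) :
    Omega k N q lam α β l =
      eps k N β l * ((∏ s ∈ Finset.univ.filter (fun s => s ≤ l), q l s ^ γ s)
        * (1 - lam l * (∏ s, q l s ^ γ s)⁻¹)) := by
  set A : k := ∏ s ∈ Finset.univ.filter (fun s => s ≤ l), q l s ^ γ s with hA
  set P : k := ∏ s, q l s ^ γ s with hPdef
  have hA0 : A ≠ 0 := Finset.prod_ne_zero_iff.2 fun s _ => zpow_ne_zero _ (hq0 l s)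
  have hP0 : P ≠ 0 := Finset.prod_ne_zero_iff.2 fun s _ => zpow_ne_zero _ (hq0 l s)
  rw [Omega]
  simp only [hγ]
  rw [if_neg hP, if_neg (by simp [hβl])]
  -- B = A * P⁻¹
  have hBQ : (∏ s ∈ Finset.univ.filter (fun s => l ≤ s), q s l ^ γ s)
      = (∏ s ∈ Finset.univ.filter (fun s => l ≤ s), q l s ^ γ s)⁻¹ := by
    rw [← Finset.prod_inv_distrib]
    exact Finset.prod_congr rfl fun s _ => by rw [hqinv, inv_zpow]
  have hins : Finset.univ.filter (fun s : Fin N => l ≤ s)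
      = insert l (Finset.univ.filter (fun s : Fin N => l < s)) := by
    ext s
    simp [le_iff_lt_or_eq, or_comm, eq_comm]
  have hQ : (∏ s ∈ Finset.univ.filter (fun s => l ≤ s), q l s ^ γ s)
      = ∏ s ∈ Finset.univ.filter (fun s => l < s), q l s ^ γ s := by
    rw [hins, Finset.prod_insert (by simp), hq1, one_zpow, one_mul]
  have hAQ : A * (∏ s ∈ Finset.univ.filter (fun s => l ≤ s), q l s ^ γ s) = P := by
    rw [hQ, hA, hPdef]
    rw [← Finset.prod_filter_mul_prod_filter_not Finset.univ (fun s => s ≤ l)]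
    congr 1
    apply Finset.prod_congr _ fun s _ => rfl
    ext s; simp [not_le]
  have hQval : (∏ s ∈ Finset.univ.filter (fun s => l ≤ s), q l s ^ γ s) = A⁻¹ * P := by
    rw [← hAQ, ← mul_assoc, inv_mul_cancel₀ hA0, one_mul]
  have hB : (∏ s ∈ Finset.univ.filter (fun s => l ≤ s), q s l ^ γ s) = A * P⁻¹ := by
    rw [hBQ, hQval, mul_inv, inv_inv]
  rw [hB]
  ring

/-- The scalar identity used in the proof of Lemma 4.5 of the paper: for `α ∈ ℕ^N`,
`β ∈ {0,1}^N` and `i ≠ j`,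
`Ω_g(α,β,i) ω_g(α+[i],β+[i],j) + ω_g(α,β,j) Ω_g(α-[j],β-[j],i) = 0`. -/
theorem stmt13 (k : Type) [Field k] [CharZero k] (N : ℕ) (hN : 0 < N)
    (q : Fin N → Fin N → k) (hq0 : ∀ i j, q i j ≠ 0) (hq1 : ∀ i, q i i = 1)
    (hqinv : ∀ i j, q j i = (q i j)⁻¹)
    (lam : Fin N → k) (hlam : ∀ i, lam i ≠ 0)
    (α : Fin N → ℤ) (hα : ∀ i, 0 ≤ α i)
    (β : Fin N → ℤ) (hβ : ∀ i, β i = 0 ∨ β i = 1)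
    (i j : Fin N) (hij : i ≠ j) :
    Omega k N q lam α β i * omg k N q lam (α + Pi.single i 1) (β + Pi.single i 1) j
      + omg k N q lam α β j * Omega k N q lam (α - Pi.single j 1) (β - Pi.single j 1) i
      = 0 := by
  have hji : j ≠ i := Ne.symm hij
  have h1 : ∀ s, (α + Pi.single i 1 : Fin N → ℤ) s - (β + Pi.single i 1 : Fin N → ℤ) s
      = α s - β s := by
    intro s; simp only [Pi.add_apply]; ring
  have h2 : ∀ s, (α - Pi.single j 1 : Fin N → ℤ) s - (β - Pi.single j 1 : Fin N → ℤ) s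
      = α s - β s := by
    intro s; simp only [Pi.sub_apply]; ring
  have h3 : ∀ s, (α + Pi.single i 1 - Pi.single j 1 : Fin N → ℤ) s
      - (β + Pi.single i 1 - Pi.single j 1 : Fin N → ℤ) s = α s - β s := by
    intro s; simp only [Pi.add_apply, Pi.sub_apply]; ring
  by_cases hPi : (∏ s, q i s ^ (α s - β s)) = lam i
  · have hT1 : Omega k N q lam α β i = 0 := by rw [Omega, if_pos hPi]
    have hT4 : Omega k N q lam (α - Pi.single j 1) (β - Pi.single j 1) i = 0 := by
      rw [Omega, if_pos]
      rw [show (∏ s, q i s ^ ((α - Pi.single j 1 : Fin N → ℤ) s - (β - Pi.single j 1 : Fin N → ℤ) s))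
          = ∏ s, q i s ^ (α s - β s) from Finset.prod_congr rfl fun s _ => by rw [h2 s]]
      exact hPi
    rw [hT1, hT4]; ring
  by_cases hβi : β i = 0
  swap
  · have hT1 : Omega k N q lam α β i = 0 := by
      rw [Omega]; split_ifs <;> rfl
    have hT4 : Omega k N q lam (α - Pi.single j 1) (β - Pi.single j 1) i = 0 := by
      rw [Omega]; split_ifs with hc1 hc2
      · rfl
      · rfl
      · exact absurd (show β i = 0 by
          have := not_not.mp hc2
          simpa [Pi.single_apply, hij] using this) hβi
    rw [hT1, hT4]; ring
  by_cases hPj : (∏ s, q j s ^ (α s - β s)) = lam j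
  · have hT2 : omg k N q lam (α + Pi.single i 1) (β + Pi.single i 1) j = 0 := by
      rw [omg, if_pos]
      rw [show (∏ s, q j s ^ ((α + Pi.single i 1 : Fin N → ℤ) s - (β + Pi.single i 1 : Fin N → ℤ) s))
          = ∏ s, q j s ^ (α s - β s) from Finset.prod_congr rfl fun s _ => by rw [h1 s]]
      exact hPj
    have hT3 : omg k N q lam α β j = 0 := by rw [omg, if_pos hPj]
    rw [hT2, hT3]; ring
  by_cases hαj : α j ≤ 0
  · have hT2 : omg k N q lam (α + Pi.single i 1) (β + Pi.single i 1) j = 0 := by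
      rw [omg]; split_ifs with hc1 hc2 hc3
      any_goals rfl
      exact absurd (show (α + Pi.single i 1 : Fin N → ℤ) j ≤ 0 by
        simpa [Pi.single_apply, hji] using hαj) hc2
    have hT3 : omg k N q lam α β j = 0 := by
      rw [omg]; split_ifs <;> rfl
    rw [hT2, hT3]; ring
  by_cases hβj : β j = 1
  swap
  · have hT2 : omg k N q lam (α + Pi.single i 1) (β + Pi.single i 1) j = 0 := by
      rw [omg]; split_ifs with hc1 hc2 hc3
      any_goals rfl
      exact absurd (show β j = 1 by
        have := not_not.mp hc3
        simpa [Pi.single_apply, hji] using this) hβj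
    have hT3 : omg k N q lam α β j = 0 := by
      rw [omg]; split_ifs <;> rfl
    rw [hT2, hT3]; ring
  -- main case
  have hT2 : omg k N q lam (α + Pi.single i 1) (β + Pi.single i 1) j
      = (Omega k N q lam (α + Pi.single i 1 - Pi.single j 1)
          (β + Pi.single i 1 - Pi.single j 1) j)⁻¹ := by
    rw [omg, if_neg, if_neg, if_neg]
    · simp [Pi.single_apply, hji, hβj]
    · simpa [Pi.single_apply, hji] using hαj
    · rw [show (∏ s, q j s ^ ((α + Pi.single i 1 : Fin N → ℤ) s - (β + Pi.single i 1 : Fin N → ℤ) s))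
          = ∏ s, q j s ^ (α s - β s) from Finset.prod_congr rfl fun s _ => by rw [h1 s]]
      exact hPj
  have hT3 : omg k N q lam α β j
      = (Omega k N q lam (α - Pi.single j 1) (β - Pi.single j 1) j)⁻¹ := by
    rw [omg, if_neg hPj, if_neg hαj, if_neg (by simp [hβj])]
  rw [hT2, hT3]
  rw [Omega_eval k N q lam hq0 hq1 hqinv α β (fun s => α s - β s) i (fun s => rfl) hPi hβi]
  rw [Omega_eval k N q lam hq0 hq1 hqinv _ _ (fun s => α s - β s) j h3 hPj
    (by simp [Pi.single_apply, hji, hβj])]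
  rw [Omega_eval k N q lam hq0 hq1 hqinv _ _ (fun s => α s - β s) j h2 hPj
    (by simp [Pi.single_apply, hβj])]
  rw [Omega_eval k N q lam hq0 hq1 hqinv _ _ (fun s => α s - β s) i h2 hPi
    (by simp [Pi.single_apply, hij, hβi])]
  simp only [sub_single_eq, eps_add_single]
  have hEi := eps_ne_zero k N β i
  have hEj := eps_ne_zero k N β j
  have hAi0 : (∏ s ∈ Finset.univ.filter (fun s => s ≤ i), q i s ^ (α s - β s)) ≠ 0 :=
    Finset.prod_ne_zero_iff.2 fun s _ => zpow_ne_zero _ (hq0 i s)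
  have hAj0 : (∏ s ∈ Finset.univ.filter (fun s => s ≤ j), q j s ^ (α s - β s)) ≠ 0 :=
    Finset.prod_ne_zero_iff.2 fun s _ => zpow_ne_zero _ (hq0 j s)
  have hPi0 : (∏ s, q i s ^ (α s - β s)) ≠ 0 :=
    Finset.prod_ne_zero_iff.2 fun s _ => zpow_ne_zero _ (hq0 i s)
  have hPj0 : (∏ s, q j s ^ (α s - β s)) ≠ 0 :=
    Finset.prod_ne_zero_iff.2 fun s _ => zpow_ne_zero _ (hq0 j s)
  have hDj0 : (1 - lam j * (∏ s, q j s ^ (α s - β s))⁻¹) ≠ 0 := by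
    rw [sub_ne_zero]
    intro hcon
    apply hPj
    field_simp at hcon
    exact hcon
  rcases lt_or_gt_of_ne hij with h | h
  · simp only [h.le, not_le.2 h, le_refl, if_true, if_false, zpow_one, zpow_neg_one,
      inv_neg, inv_one]
    have key : ∀ a c e w : k, a * c * (e * -1 * -1 * w)⁻¹ + (e * -1 * w)⁻¹ * (a * 1 * c) = 0 := by
      intro a c e w
      rw [show e * -1 * -1 * w = e * w by ring, show e * -1 * w = -(e * w) by ring, inv_neg]
      ring
    exact key _ _ _ _
  · simp only [h.le, not_le.2 h, le_refl, if_true, if_false, zpow_one, zpow_neg_one,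
      inv_neg, inv_one]
    have key : ∀ a c e w : k, a * c * (e * 1 * -1 * w)⁻¹ + (e * -1 * w)⁻¹ * (a * -1 * c) = 0 := by
      intro a c e w
      rw [show e * 1 * -1 * w = -(e * w) by ring, show e * -1 * w = -(e * w) by ring, inv_neg]
      ring
    exact key _ _ _ _
end
end
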